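/- Let (L, R) be a functorial factorization realizing a weak factorization system, and let (f, s) be a morphism f : A → B with a chosen lift s : B → Ef satisfying s ∘ f = Lf and Rf ∘ s = id_B ('cloven L-map'), and let g : B → C be a morphism in the left class. Then there exists a lift t : C → E(g∘f) with t ∘ (g ∘ f) = L(g∘f) and R(g∘f) ∘ t = id_C, such that moreover t ∘ g = E(id_A, g) ∘ s, i.e. (id_A, g) is a morphism of cloven L-maps (f, s) → (g∘f, t). -/
import Mathlib


open CategoryTheory

/-- A functorial factorization on `M`: each `f : A ⟶ B` factors as
`A ⟶(l f) E f ⟶(r f) B`, functorially in squares. -/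
structure FunctorialFactorization (M : Type*) [Category M] where
  E : ∀ {A B : M}, (A ⟶ B) → M
  l : ∀ {A B : M} (f : A ⟶ B), A ⟶ E f
  r : ∀ {A B : M} (f : A ⟶ B), E f ⟶ B
  fac : ∀ {A B : M} (f : A ⟶ B), l f ≫ r f = f
  Emap : ∀ {A B A' B' : M} {f : A ⟶ B} {f' : A' ⟶ B'}
    (h : A ⟶ A') (k : B ⟶ B'), f ≫ k = h ≫ f' → (E f ⟶ E f')
  Emap_l : ∀ {A B A' B' : M} {f : A ⟶ B} {f' : A' ⟶ B'}
    (h : A ⟶ A') (k : B ⟶ B') (w : f ≫ k = h ≫ f'),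
    l f ≫ Emap h k w = h ≫ l f'
  Emap_r : ∀ {A B A' B' : M} {f : A ⟶ B} {f' : A' ⟶ B'}
    (h : A ⟶ A') (k : B ⟶ B') (w : f ≫ k = h ≫ f'),
    Emap h k w ≫ r f' = r f ≫ k

/-- given a cloven L-map `(f, s)` and a map `g` of the left class
(so that `g` lifts against every right factor), there is a cleavage `t` for
`g ∘ f` such that `(id, g) : (f, s) → (g ∘ f, t)` is a morphism of cloven
L-maps, i.e. `t ∘ g = E(id, g) ∘ s`. -/
theorem stmt10 {M : Type*} [Category M] (F : FunctorialFactorization M)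
    (Lcl : MorphismProperty M)
    (hlift : ∀ {X Y : M} (g : X ⟶ Y), Lcl g →
      ∀ {A B : M} (f : A ⟶ B), HasLiftingProperty g (F.r f))
    {A B C : M} (f : A ⟶ B) (s : B ⟶ F.E f)
    (hs1 : f ≫ s = F.l f) (hs2 : s ≫ F.r f = 𝟙 B)
    (g : B ⟶ C) (hg : Lcl g) :
    ∃ t : C ⟶ F.E (f ≫ g),
      (f ≫ g) ≫ t = F.l (f ≫ g) ∧ t ≫ F.r (f ≫ g) = 𝟙 C ∧
      g ≫ t = s ≫ F.Emap (𝟙 A) g (by simp) := by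
  haveI := hlift g hg (f ≫ g)
  have sq : g ≫ 𝟙 C = (s ≫ F.Emap (𝟙 A) g (by simp)) ≫ F.r (f ≫ g) := by
    rw [Category.assoc, F.Emap_r, ← Category.assoc, hs2]
    simp
  have sq' : CommSq (s ≫ F.Emap (𝟙 A) g (by simp)) g (F.r (f ≫ g)) (𝟙 C) :=
    ⟨sq.symm⟩
  refine ⟨sq'.lift, ?_, sq'.fac_right, sq'.fac_left⟩
  rw [Category.assoc, sq'.fac_left, ← Category.assoc, hs1, F.Emap_l]
  simp
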